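/- arXiv:1504.00188 — 7 statements merged into one kernel-verified Lean document; each statement's English description precedes it below -/
import Mathlib

section
/- Let A be a finite-dimensional algebra over a field F with an anisotropic multiplicative norm N of degree n (i.e. N(xy)=N(x)N(y) for all x,y, and N(x)=0 implies x=0). Let c ∈ A be nonzero and let f, g be similarities of N with similarity factors α, β (i.e. N(f(x))=αN(x), N(g(x))=βN(x)). Define x∘y = xy − c(f(x)g(y)). If N(c) ≠ 1/(αβ), then (A,∘) has no zero divisors, i.e. is a division algebra. -/
/-! Taking norms in `xy = c(f(x)g(y))` gives `N(x)N(y) = N(c)αβ · N(x)N(y)`; for `x, y ≠ 0`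
anisotropy makes `N(x)N(y)` nonzero, and cancelling it forces `N(c)αβ = 1`. -/

section SimilarityTwist

variable {A K : Type*} [CommGroupWithZero K] {mul : A → A → A} {N : A → K}
  {f g : A → A} {α β : K}

theorem norm_mul_eq_of_eq_mul_similarity (hNmul : ∀ x y, N (mul x y) = N x * N y)
    (hf : ∀ x, N (f x) = α * N x) (hg : ∀ x, N (g x) = β * N x) {c x y : A}
    (h : mul x y = mul c (mul (f x) (g y))) :
    N x * N y = N c * (α * β) * (N x * N y) := by
  have hN := congrArg N h
  rw [hNmul, hNmul, hNmul, hf, hg] at hN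
  rwa [mul_assoc (N c), mul_mul_mul_comm α β]

theorem norm_eq_inv_of_eq_mul_similarity [Zero A] (hNmul : ∀ x y, N (mul x y) = N x * N y)
    (hNaniso : ∀ x, N x = 0 → x = 0) (hf : ∀ x, N (f x) = α * N x)
    (hg : ∀ x, N (g x) = β * N x) {c x y : A} (hx : x ≠ 0) (hy : y ≠ 0)
    (h : mul x y = mul c (mul (f x) (g y))) :
    N c = (α * β)⁻¹ := by
  have hNxy : N x * N y ≠ 0 :=
    mul_ne_zero (mt (hNaniso x) hx) (mt (hNaniso y) hy)
  have hcancel : N c * (α * β) = 1 :=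
    mul_right_cancel₀ hNxy <| by
      rw [one_mul]
      exact (norm_mul_eq_of_eq_mul_similarity hNmul hf hg h).symm
  exact eq_inv_of_mul_eq_one_left hcancel

end SimilarityTwist

theorem stmt_0_general (F : Type*) [Field F] (A : Type*) [AddCommGroup A] [Module F A]
    (mul : A →ₗ[F] A →ₗ[F] A) (N : A → F)
    (hNmul : ∀ x y : A, N (mul x y) = N x * N y)
    (hNaniso : ∀ x : A, N x = 0 → x = 0)
    (c : A)
    (f g : A →ₗ[F] A) (α β : F)
    (hf : ∀ x : A, N (f x) = α * N x) (hg : ∀ x : A, N (g x) = β * N x)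
    (hNc : N c ≠ (α * β)⁻¹) :
    ∀ x y : A, mul x y - mul c (mul (f x) (g y)) = 0 → x = 0 ∨ y = 0 := by
  intro x y h
  by_contra! hxy
  exact hNc <| norm_eq_inv_of_eq_mul_similarity (mul := fun a b => mul a b) hNmul hNaniso hf hg
    hxy.1 hxy.2 (sub_eq_zero.mp h)

/-- Albert-type twist `x∘y = xy − c(f(x)g(y))` of a finite-dimensional algebra with
anisotropic multiplicative norm: if `N(c) ≠ 1/(αβ)` then `(A,∘)` has no zero divisors. -/
theorem stmt_0 (F : Type*) [Field F] (A : Type*) [AddCommGroup A] [Module F A]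
    [FiniteDimensional F A]
    (mul : A →ₗ[F] A →ₗ[F] A) (N : A → F)
    (hNmul : ∀ x y : A, N (mul x y) = N x * N y)
    (hNaniso : ∀ x : A, N x = 0 → x = 0)
    (c : A) (hc : c ≠ 0)
    (f g : A →ₗ[F] A) (α β : F) (hα : α ≠ 0) (hβ : β ≠ 0)
    (hf : ∀ x : A, N (f x) = α * N x) (hg : ∀ x : A, N (g x) = β * N x)
    (hNc : N c ≠ (α * β)⁻¹) :
    ∀ x y : A, mul x y - mul c (mul (f x) (g y)) = 0 → x = 0 ∨ y = 0 :=
  stmt_0_general F A mul N hNmul hNaniso c f g α β hf hg hNc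
end

section
/- Let A be a finite-dimensional algebra over F with anisotropic multiplicative norm N of degree n, c ∈ A nonzero, and f, g similarities of N with factors α, β. Define x∘y = xy − (f(x)c)g(y). If N(c) ≠ 1/(αβ), then (A,∘) is a division algebra. -/
/-! Applying the multiplicative norm to `xy = (f(x)c)g(y)` gives
`N(x)N(y) = αβN(c) · N(x)N(y)`, and anisotropy lets us cancel `N(x)N(y)`. -/

theorem similarity_factor_mul_norm_eq_one {F A : Type*} [CommRing F] [IsDomain F]
    {mul : A → A → A} {N : A → F} (hNmul : ∀ x y : A, N (mul x y) = N x * N y)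
    {f g : A → A} {α β : F} (hf : ∀ x : A, N (f x) = α * N x)
    (hg : ∀ x : A, N (g x) = β * N x) {c x y : A} (hx : N x ≠ 0) (hy : N y ≠ 0)
    (h : mul x y = mul (mul (f x) c) (g y)) :
    α * β * N c = 1 := by
  have hnorm := congrArg N h
  rw [hNmul, hNmul, hNmul, hf, hg] at hnorm
  exact mul_left_cancel₀ (mul_ne_zero hx hy) (by linear_combination -hnorm)

theorem stmt_1_general (F : Type*) [Field F] (A : Type*) [AddCommGroup A] [Module F A]
    (mul : A →ₗ[F] A →ₗ[F] A) (N : A → F)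
    (hNmul : ∀ x y : A, N (mul x y) = N x * N y)
    (hNaniso : ∀ x : A, N x = 0 → x = 0)
    (c : A)
    (f g : A →ₗ[F] A) (α β : F)
    (hf : ∀ x : A, N (f x) = α * N x) (hg : ∀ x : A, N (g x) = β * N x)
    (hNc : N c ≠ (α * β)⁻¹) :
    ∀ x y : A, mul x y - mul (mul (f x) c) (g y) = 0 → x = 0 ∨ y = 0 := by
  intro x y h
  by_contra! hxy
  have hNx : N x ≠ 0 := mt (hNaniso x) hxy.1
  have hNy : N y ≠ 0 := mt (hNaniso y) hxy.2
  exact hNc <| eq_inv_of_mul_eq_one_right <|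
    similarity_factor_mul_norm_eq_one (mul := fun a b => mul a b) hNmul hf hg hNx hNy
      (sub_eq_zero.mp h)

/-- Albert-type twist `x∘y = xy − (f(x)c)g(y)`: if `N(c) ≠ 1/(αβ)` then `(A,∘)`
is a division algebra (no zero divisors). -/
theorem stmt_1 (F : Type*) [Field F] (A : Type*) [AddCommGroup A] [Module F A]
    [FiniteDimensional F A]
    (mul : A →ₗ[F] A →ₗ[F] A) (N : A → F)
    (hNmul : ∀ x y : A, N (mul x y) = N x * N y)
    (hNaniso : ∀ x : A, N x = 0 → x = 0)
    (c : A) (hc : c ≠ 0)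
    (f g : A →ₗ[F] A) (α β : F) (hα : α ≠ 0) (hβ : β ≠ 0)
    (hf : ∀ x : A, N (f x) = α * N x) (hg : ∀ x : A, N (g x) = β * N x)
    (hNc : N c ≠ (α * β)⁻¹) :
    ∀ x y : A, mul x y - mul (mul (f x) c) (g y) = 0 → x = 0 ∨ y = 0 :=
  stmt_1_general F A mul N hNmul hNaniso c f g α β hf hg hNc
end

section
/- Let A be a finite-dimensional algebra over F with anisotropic multiplicative norm N, c ∈ A nonzero, and f, g similarities of N with factors α, β. Define x∘y = xy − c(f(y)g(x)) (with the arguments swapped in the twisted term). If N(c) ≠ 1/(αβ), then (A,∘) is a division algebra. -/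
theorem norm_eq_inv_of_mul_eq_twist {A M : Type*} [CommGroupWithZero M] {mul : A → A → A}
    {N : A → M} (hNmul : ∀ x y, N (mul x y) = N x * N y) {f g : A → A} {α β : M}
    (hf : ∀ x, N (f x) = α * N x) (hg : ∀ x, N (g x) = β * N x) {c x y : A}
    (hx : N x ≠ 0) (hy : N y ≠ 0) (h : mul x y = mul c (mul (f y) (g x))) :
    N c = (α * β)⁻¹ := by
  have hnorm : N x * N y * (N c * (α * β)) = N x * N y * 1 := by
    have := congrArg N h
    rw [hNmul, hNmul, hNmul, hf, hg] at this
    conv_rhs => rw [mul_one, this]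
    ac_rfl
  exact eq_inv_of_mul_eq_one_left (mul_left_cancel₀ (mul_ne_zero hx hy) hnorm)

theorem stmt_2_general (F : Type*) [Field F] (A : Type*) [AddCommGroup A] [Module F A]
    (mul : A →ₗ[F] A →ₗ[F] A) (N : A → F)
    (hNmul : ∀ x y : A, N (mul x y) = N x * N y)
    (hNaniso : ∀ x : A, N x = 0 → x = 0)
    (c : A)
    (f g : A →ₗ[F] A) (α β : F)
    (hf : ∀ x : A, N (f x) = α * N x) (hg : ∀ x : A, N (g x) = β * N x)
    (hNc : N c ≠ (α * β)⁻¹) :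
    ∀ x y : A, mul x y - mul c (mul (f y) (g x)) = 0 → x = 0 ∨ y = 0 := by
  intro x y h
  by_contra! hxy
  exact hNc <| norm_eq_inv_of_mul_eq_twist hNmul hf hg (mt (hNaniso x) hxy.1)
    (mt (hNaniso y) hxy.2) (sub_eq_zero.mp h)

/-- Albert-type twist with swapped arguments `x∘y = xy − c(f(y)g(x))`:
if `N(c) ≠ 1/(αβ)` then `(A,∘)` is a division algebra (no zero divisors). -/
theorem stmt_2 (F : Type*) [Field F] (A : Type*) [AddCommGroup A] [Module F A]
    [FiniteDimensional F A]
    (mul : A →ₗ[F] A →ₗ[F] A) (N : A → F)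
    (hNmul : ∀ x y : A, N (mul x y) = N x * N y)
    (hNaniso : ∀ x : A, N x = 0 → x = 0)
    (c : A) (hc : c ≠ 0)
    (f g : A →ₗ[F] A) (α β : F) (hα : α ≠ 0) (hβ : β ≠ 0)
    (hf : ∀ x : A, N (f x) = α * N x) (hg : ∀ x : A, N (g x) = β * N x)
    (hNc : N c ≠ (α * β)⁻¹) :
    ∀ x y : A, mul x y - mul c (mul (f y) (g x)) = 0 → x = 0 ∨ y = 0 :=
  stmt_2_general F A mul N hNmul hNaniso c f g α β hf hg hNc
end

section
/- Let A be an associative unital F-algebra, f an F-algebra automorphism of A with f^n = id for some n ≥ 2, and c ∈ A such that the element 1 − c·f(c)·f²(c)···f^{n−1}(c) is invertible in A. Then the linear map F(x) = x − c·f(x) is bijective, with inverse F^{-1}(x) = (1 − c f(c) f²(c)···f^{n−1}(c))^{-1} · (x + c f(x) + c f(c) f²(x) + c f(c) f²(c) f³(x) + ··· + c f(c)···f^{n−2}(c) f^{n−1}(x)). -/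
/-!
Write `P i = c σ(c) ⋯ σ^{i-1}(c)`, so that `P (i+1) = P i · σ^i(c) = c · σ(P i)`, and
`S x = ∑_{i<n} P i σ^i(x)`. Both `S (x - c σ x)` and `S x - c σ(S x)` telescope to
`x - P n σ^n(x) = (1 - P n) x` once `σ^n = id`. Moreover `u = 1 - P n` satisfies
`u c = c σ(u)` (both products `P n σ^n(c)` and `c σ(P n)` equal `P (n+1)`), which transfers to
`u⁻¹ c = c σ(u⁻¹)`; hence `x ↦ u⁻¹ S x` is a two-sided inverse of `x ↦ x - c σ x`.
-/

open Finset

section Monoid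

variable {M G : Type*} [Monoid M] [FunLike G M M] (σ : G) (c : M)

/-- `(c t)^i = twistedPow σ c i * t^i` in the skew polynomial ring with `t a = σ(a) t`. -/
def twistedPow (i : ℕ) : M := ((List.range i).map fun j => (⇑σ)^[j] c).prod

@[simp]
theorem twistedPow_zero : twistedPow σ c 0 = 1 := rfl

theorem twistedPow_succ (i : ℕ) :
    twistedPow σ c (i + 1) = twistedPow σ c i * (⇑σ)^[i] c := by
  rw [twistedPow, List.range_succ, List.map_append, List.prod_append, List.map_singleton,
    List.prod_singleton, twistedPow]

theorem twistedPow_succ' [MonoidHomClass G M M] (i : ℕ) :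
    twistedPow σ c (i + 1) = c * σ (twistedPow σ c i) := by
  rw [twistedPow, twistedPow, map_list_prod, List.map_map, List.range_succ_eq_map, List.map_cons,
    List.prod_cons, List.map_map]
  simp only [Function.comp_def, Function.iterate_succ_apply', Function.iterate_zero_apply]

theorem twistedPow_mul_iterate [MonoidHomClass G M M] (n : ℕ) :
    twistedPow σ c n * (⇑σ)^[n] c = c * σ (twistedPow σ c n) := by
  rw [← twistedPow_succ, twistedPow_succ']

end Monoid

theorem Ring.inverse_mul_eq_mul_map_inverse {M G : Type*} [MonoidWithZero M] [FunLike G M M]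
    [MonoidHomClass G M M] (σ : G) (c : M) {u : M} (hu : IsUnit u) (h : u * c = c * σ u) :
    Ring.inverse u * c = c * σ (Ring.inverse u) :=
  calc Ring.inverse u * c = Ring.inverse u * (c * σ u) * σ (Ring.inverse u) := by
        rw [mul_assoc, mul_assoc c, ← map_mul, Ring.mul_inverse_cancel u hu, map_one, mul_one]
    _ = c * σ (Ring.inverse u) := by
        rw [← h, ← mul_assoc, Ring.inverse_mul_cancel u hu, one_mul]

section Ring

variable {A G : Type*} [Ring A] [FunLike G A A] [RingHomClass G A A] (σ : G) (c : A)

/-- Up to the factor `(1 - twistedPow σ c n)⁻¹`, the inverse of `x ↦ x - c σ(x)` when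
`σ^n = id`. -/
def twistedSum (n : ℕ) (x : A) : A := ∑ i ∈ range n, twistedPow σ c i * (⇑σ)^[i] x

theorem twistedSum_sub_mul_map (n : ℕ) (x : A) :
    twistedSum σ c n (x - c * σ x) = x - twistedPow σ c n * (⇑σ)^[n] x := by
  have hterm : ∀ i, twistedPow σ c i * (⇑σ)^[i] (x - c * σ x)
      = twistedPow σ c i * (⇑σ)^[i] x - twistedPow σ c (i + 1) * (⇑σ)^[i + 1] x := by
    intro i
    rw [iterate_map_sub, iterate_map_mul, mul_sub, twistedPow_succ, Function.iterate_succ_apply,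
      mul_assoc]
  simp only [twistedSum, hterm, sum_range_sub', twistedPow_zero, Function.iterate_zero_apply,
    one_mul]

theorem twistedSum_sub_mul_map_twistedSum (n : ℕ) (x : A) :
    twistedSum σ c n x - c * σ (twistedSum σ c n x) = x - twistedPow σ c n * (⇑σ)^[n] x := by
  have hshift : c * σ (twistedSum σ c n x)
      = ∑ i ∈ range n, twistedPow σ c (i + 1) * (⇑σ)^[i + 1] x := by
    rw [twistedSum, map_sum, mul_sum]
    refine sum_congr rfl fun i _ => ?_
    rw [map_mul, ← mul_assoc, ← twistedPow_succ', Function.iterate_succ_apply']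
  rw [hshift, twistedSum, ← sum_sub_distrib, sum_range_sub']
  simp only [twistedPow_zero, Function.iterate_zero_apply, one_mul]

variable {σ} {n : ℕ} (hσ : ∀ x, (⇑σ)^[n] x = x)
include hσ

theorem twistedSum_sub_mul_map_of_iterate_eq_id (x : A) :
    twistedSum σ c n (x - c * σ x) = (1 - twistedPow σ c n) * x := by
  rw [twistedSum_sub_mul_map, hσ, sub_mul, one_mul]

theorem twistedSum_sub_mul_map_twistedSum_of_iterate_eq_id (x : A) :
    twistedSum σ c n x - c * σ (twistedSum σ c n x) = (1 - twistedPow σ c n) * x := by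
  rw [twistedSum_sub_mul_map_twistedSum, hσ, sub_mul, one_mul]

theorem one_sub_twistedPow_mul_comm_of_iterate_eq_id :
    (1 - twistedPow σ c n) * c = c * σ (1 - twistedPow σ c n) := by
  rw [map_sub, map_one, sub_mul, mul_sub, one_mul, mul_one, ← twistedPow_mul_iterate, hσ]

end Ring

theorem stmt_5_general (F : Type*) [Field F] (A : Type*) [Ring A] [Algebra F A]
    (f : A ≃ₐ[F] A) (n : ℕ) (hfn : ∀ x : A, (⇑f)^[n] x = x)
    (c : A)
    (hu : IsUnit ((1 : A) - ((List.range n).map (fun i => (⇑f)^[i] c)).prod)) :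
    Function.Bijective (fun x : A => x - c * f x) ∧
    (∀ x : A,
      (fun x : A => x - c * f x)
        (Ring.inverse ((1 : A) - ((List.range n).map (fun i => (⇑f)^[i] c)).prod) *
          ∑ i ∈ Finset.range n, ((List.range i).map (fun j => (⇑f)^[j] c)).prod * (⇑f)^[i] x)
        = x) ∧
    (∀ x : A,
      Ring.inverse ((1 : A) - ((List.range n).map (fun i => (⇑f)^[i] c)).prod) *
          ∑ i ∈ Finset.range n,
            ((List.range i).map (fun j => (⇑f)^[j] c)).prod * (⇑f)^[i] (x - c * f x)
        = x) := by
  change IsUnit (1 - twistedPow f c n) at hu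
  have hcomm := Ring.inverse_mul_eq_mul_map_inverse f c hu
    (one_sub_twistedPow_mul_comm_of_iterate_eq_id c hfn)
  have hright : ∀ x, Ring.inverse (1 - twistedPow f c n) * twistedSum f c n x
      - c * f (Ring.inverse (1 - twistedPow f c n) * twistedSum f c n x) = x := fun x => by
    rw [map_mul, ← mul_assoc, ← hcomm, mul_assoc, ← mul_sub,
      twistedSum_sub_mul_map_twistedSum_of_iterate_eq_id c hfn, Ring.inverse_mul_cancel_left _ _ hu]
  have hleft : ∀ x, Ring.inverse (1 - twistedPow f c n) * twistedSum f c n (x - c * f x) = x :=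
    fun x => by
      rw [twistedSum_sub_mul_map_of_iterate_eq_id c hfn, Ring.inverse_mul_cancel_left _ _ hu]
  refine ⟨Function.bijective_iff_has_inverse.2 ?_, hright, hleft⟩
  exact ⟨fun x => Ring.inverse (1 - twistedPow f c n) * twistedSum f c n x, hleft, hright⟩

/-- If `f` is an algebra automorphism with `fⁿ = id` and `1 − c·f(c)···f^{n−1}(c)` is
invertible, then `F(x) = x − c·f(x)` is bijective with the stated explicit inverse. -/
theorem stmt_5 (F : Type*) [Field F] (A : Type*) [Ring A] [Algebra F A]
    (f : A ≃ₐ[F] A) (n : ℕ) (hn : 2 ≤ n) (hfn : ∀ x : A, (⇑f)^[n] x = x)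
    (c : A)
    (hu : IsUnit ((1 : A) - ((List.range n).map (fun i => (⇑f)^[i] c)).prod)) :
    Function.Bijective (fun x : A => x - c * f x) ∧
    (∀ x : A,
      (fun x : A => x - c * f x)
        (Ring.inverse ((1 : A) - ((List.range n).map (fun i => (⇑f)^[i] c)).prod) *
          ∑ i ∈ Finset.range n, ((List.range i).map (fun j => (⇑f)^[j] c)).prod * (⇑f)^[i] x)
        = x) ∧
    (∀ x : A,
      Ring.inverse ((1 : A) - ((List.range n).map (fun i => (⇑f)^[i] c)).prod) *
          ∑ i ∈ Finset.range n,
            ((List.range i).map (fun j => (⇑f)^[j] c)).prod * (⇑f)^[i] (x - c * f x)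
        = x) :=
  stmt_5_general F A f n hfn c hu
end

section
/- Let A be a quaternion algebra over F (associative with canonical involution σ and norm N), f, g ∈ Aut(A) automorphisms with f² = g² = id, and c ∈ A× such that 1 − c f(c) and 1 − c g(c) are invertible. Define x∘y = xy − c f(x) g(y) and e = 1. Then L_e^{-1}(y) = (1 − c g(c))^{-1}(y + c g(y)) and R_e^{-1}(x) = (1 − c f(c))^{-1}(x + c f(x)), and the unital twisted product satisfies x∗y = [(1−c f(c))^{-1}(x + c f(x))]·[(1−c g(c))^{-1}(y + c g(y))] − c·[(1−f(c)c)^{-1}(f(x) + f(c)x)]·[(1−g(c)c)^{-1}(g(y) + g(c)y)]. -/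
/-!
An involutive automorphism `σ` carries `(1 - c σ(c))⁻¹ (x + c σ(x))` to
`(1 - σ(c) c)⁻¹ (σ(x) + σ(c) x)`, and `c (1 - d c)⁻¹ = (1 - c d)⁻¹ c` lets the factor `c` pass
through that inverse; after this the candidate inverses of `L_e` and `R_e` collapse to the
identity by a ring computation, and the formula for `∗` is a rewrite.
-/

open scoped Ring

theorem map_ringInverse {M N E : Type*} [MonoidWithZero M] [MonoidWithZero N] [EquivLike E M N]
    [MulEquivClass E M N] (e : E) (a : M) : e a⁻¹ʳ = (e a)⁻¹ʳ := by
  by_cases ha : IsUnit a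
  · rw [← one_mul (e a)⁻¹ʳ, Ring.eq_mul_inverse_iff_mul_eq _ _ _ (ha.map e), ← map_mul,
      Ring.inverse_mul_cancel _ ha, map_one]
  · rw [Ring.inverse_non_unit a ha, Ring.inverse_non_unit _ ((isUnit_map_iff e a).not.mpr ha),
      map_zero]

theorem mul_ringInverse_one_sub_mul {R : Type*} [Ring R] {c d : R} (hcd : IsUnit (1 - c * d))
    (hdc : IsUnit (1 - d * c)) : c * (1 - d * c)⁻¹ʳ = (1 - c * d)⁻¹ʳ * c := by
  have hswap : (1 - c * d) * c = c * (1 - d * c) := by noncomm_ring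
  rw [eq_comm, Ring.inverse_mul_eq_iff_eq_mul _ _ _ hcd, ← mul_assoc, hswap, mul_assoc,
    Ring.mul_inverse_cancel _ hdc, mul_one]

section Involution

variable {R E : Type*} [Ring R] [EquivLike E R R] [RingEquivClass E R R] {σ : E}

theorem map_ringInverse_one_sub_mul_mul_add (hσ : ∀ x, σ (σ x) = x) (c x : R) :
    σ ((1 - c * σ c)⁻¹ʳ * (x + c * σ x)) = (1 - σ c * c)⁻¹ʳ * (σ x + σ c * x) := by
  rw [map_mul, map_ringInverse, map_sub, map_one, map_add, map_mul, map_mul, hσ, hσ]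

theorem ringInverse_one_sub_mul_mul_add_sub (hσ : ∀ x, σ (σ x) = x) {c : R}
    (h₁ : IsUnit (1 - c * σ c)) (h₂ : IsUnit (1 - σ c * c)) (x : R) :
    (1 - c * σ c)⁻¹ʳ * (x + c * σ x) - c * σ ((1 - c * σ c)⁻¹ʳ * (x + c * σ x)) = x := by
  have hcancel : x + c * σ x - c * (σ x + σ c * x) = (1 - c * σ c) * x := by noncomm_ring
  rw [map_ringInverse_one_sub_mul_mul_add hσ, ← mul_assoc, mul_ringInverse_one_sub_mul h₁ h₂,
    mul_assoc, ← mul_sub, hcancel, Ring.inverse_mul_cancel_left _ _ h₁]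

end Involution

theorem stmt_17_general (F : Type*) [Field F] (A : Type*) [Ring A] [Algebra F A]
    (f g : A ≃ₐ[F] A) (hf2 : ∀ x : A, f (f x) = x) (hg2 : ∀ x : A, g (g x) = x)
    (c : A)
    (hu1 : IsUnit ((1 : A) - c * f c)) (hu2 : IsUnit ((1 : A) - c * g c))
    (hu3 : IsUnit ((1 : A) - f c * c)) (hu4 : IsUnit ((1 : A) - g c * c)) :
    (∀ y : A,
      (1 : A) * (Ring.inverse ((1 : A) - c * g c) * (y + c * g y))
        - c * (f 1 * g (Ring.inverse ((1 : A) - c * g c) * (y + c * g y))) = y) ∧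
    (∀ x : A,
      (Ring.inverse ((1 : A) - c * f c) * (x + c * f x)) * 1
        - c * (f (Ring.inverse ((1 : A) - c * f c) * (x + c * f x)) * g 1) = x) ∧
    (∀ x y : A,
      (Ring.inverse ((1 : A) - c * f c) * (x + c * f x)) *
          (Ring.inverse ((1 : A) - c * g c) * (y + c * g y))
        - c * (f (Ring.inverse ((1 : A) - c * f c) * (x + c * f x)) *
               g (Ring.inverse ((1 : A) - c * g c) * (y + c * g y)))
      = (Ring.inverse ((1 : A) - c * f c) * (x + c * f x)) *
          (Ring.inverse ((1 : A) - c * g c) * (y + c * g y))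
        - c * ((Ring.inverse ((1 : A) - f c * c) * (f x + f c * x)) *
               (Ring.inverse ((1 : A) - g c * c) * (g y + g c * y)))) := by
  refine ⟨fun y ↦ ?_, fun x ↦ ?_, fun x y ↦ ?_⟩
  · rw [map_one, one_mul, one_mul, ringInverse_one_sub_mul_mul_add_sub hg2 hu2 hu4]
  · rw [map_one, mul_one, mul_one, ringInverse_one_sub_mul_mul_add_sub hf2 hu1 hu3]
  · rw [map_ringInverse_one_sub_mul_mul_add hf2, map_ringInverse_one_sub_mul_mul_add hg2]

/-- For `x∘y = xy − c f(x) g(y)` with `f² = g² = id` and the relevant elements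
invertible, the explicit inverses of `L_e`, `R_e` (`e = 1`) and the explicit unital
twisted multiplication `∗` are as stated. -/
theorem stmt_17 (F : Type*) [Field F] (A : Type*) [Ring A] [Algebra F A]
    (f g : A ≃ₐ[F] A) (hf2 : ∀ x : A, f (f x) = x) (hg2 : ∀ x : A, g (g x) = x)
    (c : A) (hc : IsUnit c)
    (hu1 : IsUnit ((1 : A) - c * f c)) (hu2 : IsUnit ((1 : A) - c * g c))
    (hu3 : IsUnit ((1 : A) - f c * c)) (hu4 : IsUnit ((1 : A) - g c * c)) :
    (∀ y : A,
      (1 : A) * (Ring.inverse ((1 : A) - c * g c) * (y + c * g y))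
        - c * (f 1 * g (Ring.inverse ((1 : A) - c * g c) * (y + c * g y))) = y) ∧
    (∀ x : A,
      (Ring.inverse ((1 : A) - c * f c) * (x + c * f x)) * 1
        - c * (f (Ring.inverse ((1 : A) - c * f c) * (x + c * f x)) * g 1) = x) ∧
    (∀ x y : A,
      (Ring.inverse ((1 : A) - c * f c) * (x + c * f x)) *
          (Ring.inverse ((1 : A) - c * g c) * (y + c * g y))
        - c * (f (Ring.inverse ((1 : A) - c * f c) * (x + c * f x)) *
               g (Ring.inverse ((1 : A) - c * g c) * (y + c * g y)))
      = (Ring.inverse ((1 : A) - c * f c) * (x + c * f x)) *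
          (Ring.inverse ((1 : A) - c * g c) * (y + c * g y))
        - c * ((Ring.inverse ((1 : A) - f c * c) * (f x + f c * x)) *
               (Ring.inverse ((1 : A) - g c * c) * (g y + g c * y)))) :=
  stmt_17_general F A f g hf2 hg2 c hu1 hu2 hu3 hu4
end

section
/- Let A be an associative unital division algebra, f, g automorphisms of A with f² = g² = id, and c ∈ F× central with c² ≠ 1 and c³ ≠ 1. Define x∘y = xy − c f(x) g(y), e = 1, and x∗y = R_e^{-1}(x)∘L_e^{-1}(y). Then x∗y = (1−c²)^{-2}(1−c³)·xy + (1+c)^{-2} c (1−c)^{-1} · (x g(y) + f(x) y − f(x) g(y)). -/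
/-!
Both arguments of `∘` carry the same scalar `(1 - c²)⁻¹`, which factors out squared. What remains
is the expansion of `(x + c f(x))(y + c g(y)) − c (f(x) + c x)(g(y) + c y)`, an identity over any
commutative base ring, and `(c − c²)/(1 − c²)² = c/((1 + c)²(1 − c))`.
-/

theorem involutive_twisted_mul_expand {R A Φ : Type*} [CommRing R] [Ring A] [Algebra R A]
    [FunLike Φ A A] [AlgHomClass Φ R A A] (f g : Φ) (hf2 : ∀ x, f (f x) = x)
    (hg2 : ∀ x, g (g x) = x) (c : R) (x y : A) :
    (x + c • f x) * (y + c • g y) - c • (f (x + c • f x) * g (y + c • g y))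
      = (1 - c ^ 3) • (x * y) + (c - c ^ 2) • (x * g y + f x * y - f x * g y) := by
  simp only [map_add, map_smul, hf2, hg2, add_mul, mul_add, smul_mul_assoc, mul_smul_comm]
  match_scalars <;> ring

theorem stmt_18_general (F : Type*) [Field F] (A : Type*) [DivisionRing A] [Algebra F A]
    (f g : A ≃ₐ[F] A) (hf2 : ∀ x : A, f (f x) = x) (hg2 : ∀ x : A, g (g x) = x)
    (c : F) (hc2 : c ^ 2 ≠ 1) :
    ∀ x y : A,
      ((1 - c ^ 2)⁻¹ • (x + c • f x)) * ((1 - c ^ 2)⁻¹ • (y + c • g y))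
        - c • (f ((1 - c ^ 2)⁻¹ • (x + c • f x)) * g ((1 - c ^ 2)⁻¹ • (y + c • g y)))
      = (((1 - c ^ 2) ^ 2)⁻¹ * (1 - c ^ 3)) • (x * y)
        + (((1 + c) ^ 2)⁻¹ * c * (1 - c)⁻¹) • (x * g y + f x * y - f x * g y) := by
  intro x y
  have hp : 1 + c ≠ 0 := fun h => hc2 <| by rw [← neg_eq_of_add_eq_zero_right h, neg_one_sq]
  have hm : 1 - c ≠ 0 := fun h => hc2 <| by rw [← sub_eq_zero.mp h, one_pow]
  have hcoeff : ((1 - c ^ 2) ^ 2)⁻¹ * (c - c ^ 2) = ((1 + c) ^ 2)⁻¹ * c * (1 - c)⁻¹ := by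
    field_simp
    ring
  set k := (1 - c ^ 2)⁻¹
  calc k • (x + c • f x) * k • (y + c • g y) - c • (f (k • (x + c • f x)) * g (k • (y + c • g y)))
      = (k * k) • ((x + c • f x) * (y + c • g y)
          - c • (f (x + c • f x) * g (y + c • g y))) := by
        simp only [map_smul, smul_mul_smul_comm, smul_sub, smul_comm c]
    _ = _ := by
        rw [involutive_twisted_mul_expand f g hf2 hg2, smul_add, smul_smul,
          smul_smul, ← hcoeff, ← sq, inv_pow]

/-- For `x∘y = xy − c f(x) g(y)` with `f² = g² = id` and a central scalar `c`
(`c² ≠ 1`, `c³ ≠ 1`), the unital twisted multiplication satisfies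
`x∗y = (1−c²)⁻²(1−c³) xy + (1+c)⁻² c (1−c)⁻¹ (x g(y) + f(x) y − f(x) g(y))`. -/
theorem stmt_18 (F : Type*) [Field F] (A : Type*) [DivisionRing A] [Algebra F A]
    (f g : A ≃ₐ[F] A) (hf2 : ∀ x : A, f (f x) = x) (hg2 : ∀ x : A, g (g x) = x)
    (c : F) (hc0 : c ≠ 0) (hc2 : c ^ 2 ≠ 1) (hc3 : c ^ 3 ≠ 1) :
    ∀ x y : A,
      ((1 - c ^ 2)⁻¹ • (x + c • f x)) * ((1 - c ^ 2)⁻¹ • (y + c • g y))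
        - c • (f ((1 - c ^ 2)⁻¹ • (x + c • f x)) * g ((1 - c ^ 2)⁻¹ • (y + c • g y)))
      = (((1 - c ^ 2) ^ 2)⁻¹ * (1 - c ^ 3)) • (x * y)
        + (((1 + c) ^ 2)⁻¹ * c * (1 - c)⁻¹) • (x * g y + f x * y - f x * g y) :=
  stmt_18_general F A f g hf2 hg2 c hc2
end

section
/- Let K/F be a finite field extension with norm N_{K/F} multiplicative, σ an F-automorphism of K, and A a finite-dimensional F-algebra with anisotropic multiplicative norm N containing K as a subalgebra with N|_K = N_{K/F}. Let f, g be similarities of N with factors α, β such that f|_K(x) = a σ^s(x) and g|_K(x) = b σ^t(x) for some a, b ∈ K, so N(a) = α, N(b) = β. If c ∈ K× then (K,∘) with x∘y = xy − c f(x) g(y) is a subalgebra of (A,∘), and its multiplication satisfies x∘y = xy − c·a σ^s(x)·b σ^t(y) = xy − (abc)σ^s(x)σ^t(y) for x, y ∈ K. Moreover if N(c) ≠ 1/(αβ), then (A,∘) is a division algebra. -/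
/-- Let `K/F` be a finite field extension embedded (via `ι`) as a subalgebra of an
`F`-algebra `A` with anisotropic multiplicative norm `N` extending the field norm,
and let `f, g` be similarities of `N` restricting on `K` to `a·σˢ` and `b·σᵗ`.
Then `N(ι a) = α`, `N(ι b) = β`, `K` is closed under `x∘y = xy − c(f(x)g(y))` with
`x∘y = xy − (abc)σˢ(x)σᵗ(y)` on `K`, and if `N(c) ≠ 1/(αβ)` then `(A,∘)` is a
division algebra. -/
theorem stmt_19 (F : Type*) [Field F] (K : Type*) [Field K] [Algebra F K]
    [FiniteDimensional F K]
    (A : Type*) [AddCommGroup A] [Module F A] [FiniteDimensional F A]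
    (mul : A →ₗ[F] A →ₗ[F] A) (N : A → F)
    (hNmul : ∀ x y : A, N (mul x y) = N x * N y)
    (hNaniso : ∀ x : A, N x = 0 → x = 0)
    (ι : K →ₗ[F] A) (hιinj : Function.Injective ι)
    (hιmul : ∀ x y : K, ι (x * y) = mul (ι x) (ι y))
    (hNK : ∀ k : K, N (ι k) = Algebra.norm F k)
    (σ : K ≃ₐ[F] K) (s t : ℕ)
    (f g : A →ₗ[F] A) (α β : F) (hα : α ≠ 0) (hβ : β ≠ 0)
    (hf : ∀ x : A, N (f x) = α * N x) (hg : ∀ x : A, N (g x) = β * N x)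
    (a b : K)
    (hfK : ∀ k : K, f (ι k) = ι (a * (σ ^ s) k))
    (hgK : ∀ k : K, g (ι k) = ι (b * (σ ^ t) k))
    (c : K) (hc : c ≠ 0) :
    (N (ι a) = α ∧ N (ι b) = β) ∧
    (∀ x y : K,
      mul (ι x) (ι y) - mul (ι c) (mul (f (ι x)) (g (ι y)))
        = ι (x * y - (a * b * c) * ((σ ^ s) x * (σ ^ t) y))) ∧
    (N (ι c) ≠ (α * β)⁻¹ →
      ∀ x y : A, mul x y - mul (ι c) (mul (f x) (g y)) = 0 → x = 0 ∨ y = 0) := by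
  have hN1 : N (ι 1) = 1 := by rw [hNK]; simp
  have hNa : N (ι a) = α := by
    have := hf (ι 1)
    rw [hfK, hN1, mul_one] at this
    simpa using this
  have hNb : N (ι b) = β := by
    have := hg (ι 1)
    rw [hgK, hN1, mul_one] at this
    simpa using this
  refine ⟨⟨hNa, hNb⟩, ?_, ?_⟩
  · intro x y
    simp only [hfK, hgK, ← hιmul, ← map_sub]
    congr 1
    ring
  · intro hNc x y h
    by_contra hcon
    push_neg at hcon
    obtain ⟨hx, hy⟩ := hcon
    have hx' : N x ≠ 0 := fun h0 => hx (hNaniso x h0)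
    have hy' : N y ≠ 0 := fun h0 => hy (hNaniso y h0)
    have heq : mul x y = mul (ι c) (mul (f x) (g y)) := by
      rw [sub_eq_zero] at h; exact h
    have hNeq : N x * N y = N (ι c) * (α * N x * (β * N y)) := by
      rw [← hNmul, heq, hNmul, hNmul, hf, hg]
    have h1 : (α * β) * N (ι c) * (N x * N y) = 1 * (N x * N y) := by
      rw [one_mul]; linear_combination -hNeq
    have h2 := mul_right_cancel₀ (mul_ne_zero hx' hy') h1
    exact hNc (eq_inv_of_mul_eq_one_left (by linear_combination h2))
end
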